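/- For every positive integer m and every ρ > 0, the recurrence L_{m+2}(ρ) = ((m+2)/ρ²)(m L_m(ρ) − A_{m+2}(ρ)) holds. -/

import Mathlib

/-- The normalized Bessel-type function `A_m`. -/
noncomputable def A (m : ℕ) (t : ℝ) : ℝ :=
  ∑' ℓ : ℕ, (-1 : ℝ) ^ ℓ * Real.Gamma ((m : ℝ) / 2)
    / (ℓ.factorial * Real.Gamma ((ℓ : ℝ) + (m : ℝ) / 2)) * (t / 2) ^ (2 * ℓ)

/-- `L_m(ρ) = ∫_0^1 t^{m-1} A_{m+2}(ρ t) dt`. -/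
noncomputable def L (m : ℕ) (ρ : ℝ) : ℝ :=
  ∫ t in (0:ℝ)..1, t ^ (m - 1) * A (m + 2) (ρ * t)

/-! Expanding `A_{m+2}(ρt)` in its power series and integrating termwise gives
`L_m(ρ) = ∑ c_ℓ / (2ℓ + m)` with `c_ℓ = besselCoeff ν ℓ * (ρ²/4)^ℓ`, `ν = (m+2)/2`.
In `m L_m − A_{m+2}` the `ℓ`-th term becomes `−2ℓ c_ℓ / (2ℓ + m)`: the term `ℓ = 0` vanishes,
and since `Γ(ν + 1) = ν Γ(ν)`, the term `ℓ = k + 1` is `ρ² / (m+2)` times the `k`-th term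
of `L_{m+2}`. -/

open Real Filter MeasureTheory

noncomputable def besselCoeff (ν : ℝ) (ℓ : ℕ) : ℝ :=
  (-1) ^ ℓ * Gamma ν / (ℓ.factorial * Gamma (ℓ + ν))

lemma besselCoeff_succ {ν : ℝ} {n : ℕ} (h : (n : ℝ) + ν ≠ 0) :
    besselCoeff ν (n + 1) = -besselCoeff ν n / ((n + 1) * (n + ν)) := by
  have hΓ : Gamma ((n + 1 : ℕ) + ν) = (n + ν) * Gamma (n + ν) := by
    rw [← Gamma_add_one h]; push_cast; ring_nf
  simp only [besselCoeff, hΓ, Nat.factorial_succ, pow_succ]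
  push_cast
  field_simp

lemma besselCoeff_succ_eq_besselCoeff_add_one {ν : ℝ} (hν : ν ≠ 0) (n : ℕ) :
    besselCoeff ν (n + 1) = -besselCoeff (ν + 1) n / (ν * (n + 1)) := by
  have hΓ : Gamma ((n + 1 : ℕ) + ν) = Gamma (n + (ν + 1)) := by push_cast; ring_nf
  simp only [besselCoeff, hΓ, Gamma_add_one hν, Nat.factorial_succ, pow_succ]
  push_cast
  field_simp

lemma summable_norm_besselCoeff_mul_pow {ν : ℝ} (hν : 0 < ν) (x : ℝ) :
    Summable fun ℓ => ‖besselCoeff ν ℓ * x ^ ℓ‖ := by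
  refine summable_of_ratio_norm_eventually_le (r := 1 / 2) (by norm_num) ?_
  filter_upwards [eventually_ge_atTop ⌈2 * |x|⌉₊, eventually_ge_atTop 1] with n hxn hn
  have hxn : 2 * |x| ≤ n := Nat.ceil_le.mp hxn
  have hn : (1 : ℝ) ≤ n := by exact_mod_cast hn
  have hratio : |x| / ((n + 1) * (n + ν)) ≤ 1 / 2 := by
    rw [div_le_iff₀ (by positivity)]
    nlinarith
  have hpos : (0 : ℝ) < (n + 1) * (n + ν) := by positivity
  calc ‖‖besselCoeff ν (n + 1) * x ^ (n + 1)‖‖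
        = |x| / ((n + 1) * (n + ν)) * ‖besselCoeff ν n * x ^ n‖ := by
          rw [norm_norm, besselCoeff_succ (by positivity), pow_succ]
          simp only [Real.norm_eq_abs, abs_mul, abs_div, abs_neg, abs_of_pos hpos]
          ring
    _ ≤ 1 / 2 * ‖‖besselCoeff ν n * x ^ n‖‖ := by rw [norm_norm]; gcongr

lemma A_eq_tsum (m : ℕ) (t : ℝ) :
    A m t = ∑' ℓ, besselCoeff ((m : ℝ) / 2) ℓ * (t ^ 2 / 4) ^ ℓ := by
  refine tsum_congr fun ℓ => ?_
  rw [besselCoeff, pow_mul]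
  ring

lemma intervalIntegral_tsum_mul_pow {c : ℕ → ℝ} (hc : Summable fun ℓ => ‖c ℓ‖) (e : ℕ → ℕ) :
    ∫ t in (0 : ℝ)..1, ∑' ℓ, c ℓ * t ^ e ℓ = ∑' ℓ, c ℓ / (e ℓ + 1) := by
  have hbound : ∀ ℓ, ∀ t ∈ Set.uIoc (0 : ℝ) 1, ‖c ℓ * t ^ e ℓ‖ ≤ ‖c ℓ‖ := by
    intro ℓ t ht
    rw [Set.uIoc_of_le zero_le_one] at ht
    rw [norm_mul, norm_pow, Real.norm_of_nonneg ht.1.le]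
    exact mul_le_of_le_one_right (norm_nonneg _) (pow_le_one₀ ht.1.le ht.2)
  have hsum := intervalIntegral.hasSum_integral_of_dominated_convergence (μ := volume)
    (F := fun ℓ t => c ℓ * t ^ e ℓ) (fun ℓ _ => ‖c ℓ‖)
    (fun ℓ => (continuous_const.mul (continuous_pow _)).aestronglyMeasurable)
    (fun ℓ => ae_of_all _ (hbound ℓ)) (ae_of_all _ fun _ _ => hc) intervalIntegrable_const
    (ae_of_all _ fun t ht => (hc.of_norm_bounded fun ℓ => hbound ℓ t ht).hasSum)
  simp only [intervalIntegral.integral_const_mul, integral_pow] at hsum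
  simpa [div_eq_mul_inv] using hsum.tsum_eq.symm

lemma L_eq_tsum {m : ℕ} (hm : 0 < m) (ρ : ℝ) :
    L m ρ = ∑' ℓ, besselCoeff ((m + 2 : ℕ) / 2) ℓ * (ρ ^ 2 / 4) ^ ℓ / (2 * ℓ + m) := by
  have hseries (t : ℝ) : t ^ (m - 1) * A (m + 2) (ρ * t) =
      ∑' ℓ, besselCoeff ((m + 2 : ℕ) / 2) ℓ * (ρ ^ 2 / 4) ^ ℓ * t ^ (2 * ℓ + (m - 1)) := by
    rw [A_eq_tsum, ← tsum_mul_left]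
    refine tsum_congr fun ℓ => ?_
    rw [pow_add, pow_mul]
    ring
  have hexp (ℓ : ℕ) : ((2 * ℓ + (m - 1) : ℕ) : ℝ) + 1 = 2 * ℓ + m := by
    rw [Nat.cast_add, Nat.cast_sub hm]
    push_cast
    ring
  have hν : (0 : ℝ) < ((m + 2 : ℕ) : ℝ) / 2 := by positivity
  simp only [L, hseries]
  rw [intervalIntegral_tsum_mul_pow (summable_norm_besselCoeff_mul_pow hν _)]
  simp only [hexp]

lemma besselCoeff_recurrence_term (m k : ℕ) {ρ : ℝ} (hρ : ρ ≠ 0) :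
    ((m : ℝ) + 2) / ρ ^ 2 *
        (m * (besselCoeff ((m + 2 : ℕ) / 2) (k + 1) * (ρ ^ 2 / 4) ^ (k + 1) / (2 * (k + 1 : ℕ) + m))
          - besselCoeff ((m + 2 : ℕ) / 2) (k + 1) * (ρ ^ 2 / 4) ^ (k + 1)) =
      besselCoeff ((m + 2 + 2 : ℕ) / 2) k * (ρ ^ 2 / 4) ^ k / (2 * k + (m + 2 : ℕ)) := by
  rw [besselCoeff_succ_eq_besselCoeff_add_one (by positivity),
    show ((m + 2 + 2 : ℕ) : ℝ) / 2 = (m + 2 : ℕ) / 2 + 1 by push_cast; ring]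
  push_cast
  field_simp
  ring

theorem L_recurrence (m : ℕ) (hm : 0 < m) (ρ : ℝ) (hρ : 0 < ρ) :
    L (m + 2) ρ = ((m : ℝ) + 2) / ρ ^ 2 * (m * L m ρ - A (m + 2) ρ) := by
  have hc : Summable fun ℓ => ‖besselCoeff ((m + 2 : ℕ) / 2) ℓ * (ρ ^ 2 / 4) ^ ℓ‖ :=
    summable_norm_besselCoeff_mul_pow (by positivity) _
  have hcm : Summable fun ℓ : ℕ =>
      besselCoeff ((m + 2 : ℕ) / 2) ℓ * (ρ ^ 2 / 4) ^ ℓ / (2 * ℓ + m) := by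
    refine hc.of_norm_bounded fun ℓ => ?_
    have : (1 : ℝ) ≤ 2 * ℓ + m := by
      have : (1 : ℝ) ≤ m := by exact_mod_cast hm
      linarith [(ℓ.cast_nonneg : (0 : ℝ) ≤ ℓ)]
    rw [norm_div, Real.norm_of_nonneg (by linarith : (0 : ℝ) ≤ 2 * ℓ + m)]
    exact div_le_self (norm_nonneg _) this
  rw [L_eq_tsum (by omega : 0 < m + 2), L_eq_tsum hm, A_eq_tsum]
  rw [← tsum_mul_left (a := (m : ℝ))]
  have hc' : Summable fun ℓ => besselCoeff ((m + 2 : ℕ) / 2) ℓ * (ρ ^ 2 / 4) ^ ℓ := hc.of_norm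
  rw [← Summable.tsum_sub (hcm.mul_left (m : ℝ)) hc', ← tsum_mul_left,
    Summable.tsum_eq_zero_add (((hcm.mul_left (m : ℝ)).sub hc').mul_left _)]
  simp only [besselCoeff_recurrence_term m _ hρ.ne']
  have hm' : (m : ℝ) ≠ 0 := by exact_mod_cast hm.ne'
  rw [Nat.cast_zero, mul_zero, zero_add, pow_zero, mul_one, mul_div_cancel₀ _ hm', sub_self,
    mul_zero, zero_add]
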